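/- arXiv:2011.11187 — 2 statements merged into one kernel-verified Lean document; each statement's English description precedes it below -/
import Mathlib

section
/- For every finite graph G on n vertices, μ(G) = (n - e_p(G))/2. -/
variable {V : Type*}

/-- A matching of `G`, given as a set of edges: a set of edges of `G` that are
pairwise non-adjacent (no two distinct edges share a vertex). -/
def IsMatchingSet (G : SimpleGraph V) (M : Set (Sym2 V)) : Prop :=
  M ⊆ G.edgeSet ∧ ∀ e ∈ M, ∀ f ∈ M, e ≠ f → ∀ v : V, ¬(v ∈ e ∧ v ∈ f)

/-- ν(G): the maximum size of a matching of `G`. -/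
noncomputable def matchingNumber (G : SimpleGraph V) : ℕ :=
  sSup {n | ∃ M : Set (Sym2 V), IsMatchingSet G M ∧ M.ncard = n}

/-- λ(G): the maximum of |H| + |H'| over pairs (H, H') of disjoint matchings of `G`. -/
noncomputable def lambdaParam (G : SimpleGraph V) : ℕ :=
  sSup {n | ∃ H H' : Set (Sym2 V), IsMatchingSet G H ∧ IsMatchingSet G H' ∧
    Disjoint H H' ∧ H.ncard + H'.ncard = n}

/-- μ(G): the maximum of |H| over pairs (H, H') of disjoint matchings of `G` with
|H| + |H'| = λ(G). -/
noncomputable def muParam (G : SimpleGraph V) : ℕ :=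
  sSup {n | ∃ H H' : Set (Sym2 V), IsMatchingSet G H ∧ IsMatchingSet G H' ∧
    Disjoint H H' ∧ H.ncard + H'.ncard = lambdaParam G ∧ H.ncard = n}

/-- The degree of `v` in `G` (stated without decidability assumptions). -/
noncomputable def degree' (G : SimpleGraph V) (v : V) : ℕ := Nat.card (G.neighborSet v)

/-- The connected component `c` of `G` is a path: every vertex of `c` has degree at most 2
in `G`, and no cycle of `G` passes through a vertex of `c`. (An isolated vertex counts as a
path, namely an even path with zero edges.) -/
def IsPathComponent (G : SimpleGraph V) (c : G.ConnectedComponent) : Prop :=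
  (∀ v, G.connectedComponentMk v = c → degree' G v ≤ 2) ∧
  (∀ v, G.connectedComponentMk v = c → ∀ w : G.Walk v v, ¬ w.IsCycle)

/-- `G'` is a pec decomposition of `G`: a spanning subgraph of `G` each of whose connected
components is a path or a cycle with an even number of edges (equivalently, all degrees of
`G'` are at most 2 and every cycle of `G'` is even). -/
def IsPec (G G' : SimpleGraph V) : Prop :=
  G' ≤ G ∧ (∀ v, degree' G' v ≤ 2) ∧ ∀ (v : V) (w : G'.Walk v v), w.IsCycle → Even w.length

/-- p(G'): the number of connected components of `G'` that are paths. -/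
noncomputable def pathCount (G' : SimpleGraph V) : ℕ :=
  Nat.card {c : G'.ConnectedComponent // IsPathComponent G' c}

/-- e(G'): the number of connected components of `G'` that are paths with an even number of
edges, equivalently paths with an odd number of vertices. -/
noncomputable def evenPathCount (G' : SimpleGraph V) : ℕ :=
  Nat.card {c : G'.ConnectedComponent // IsPathComponent G' c ∧ Odd (Nat.card c.supp)}

/-- e(G): the minimum of e(G') over all pec decompositions `G'` of `G`. -/
noncomputable def eMin (G : SimpleGraph V) : ℕ :=
  sInf {n | ∃ G' : SimpleGraph V, IsPec G G' ∧ evenPathCount G' = n}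

/-- p(G): the minimum of p(G') over all pec decompositions `G'` of `G`. -/
noncomputable def pMin (G : SimpleGraph V) : ℕ :=
  sInf {n | ∃ G' : SimpleGraph V, IsPec G G' ∧ pathCount G' = n}

/-- e_p(G): the minimum of e(G') over all pec decompositions `G'` of `G` with p(G') = p(G). -/
noncomputable def epMin (G : SimpleGraph V) : ℕ :=
  sInf {n | ∃ G' : SimpleGraph V, IsPec G G' ∧ pathCount G' = pMin G ∧ evenPathCount G' = n}

/-!
Two disjoint matchings `H`, `H'` of `G` form a pec decomposition of `G` (a cycle of `H ∪ H'`
alternates between them, so it is even), and conversely every pec decomposition `G'` splits into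
two disjoint matchings by taking the edges of each path and each even cycle alternately. A
component with `k` vertices has `k - 1` edges if it is a path and `k` if it is a cycle, and the
alternating split puts `⌊k / 2⌋` of them into the first matching, the most any matching can put
there. Summing over components, `G'` has `n - p(G')` edges and the first matching has
`(n - e(G')) / 2` of them. Hence `λ(G) = n - p(G)`; the union of a pair attaining `μ(G)` is a
decomposition with `p(G') = p(G)`, so `2 μ(G) ≤ n - e_p(G)`, and splitting a decomposition that
attains `e_p(G)` gives the reverse inequality.
-/

namespace List

variable {α : Type*}

def everyOther : Bool → List α → List α
  | _, [] => []
  | true, a :: l => a :: everyOther false l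
  | false, _ :: l => everyOther true l

@[simp] lemma everyOther_nil (b : Bool) : everyOther b ([] : List α) = [] := by cases b <;> rfl

@[simp] lemma everyOther_true_cons (a : α) (l : List α) :
    everyOther true (a :: l) = a :: everyOther false l := rfl

@[simp] lemma everyOther_false_cons (a : α) (l : List α) :
    everyOther false (a :: l) = everyOther true l := rfl

lemma length_everyOther (b : Bool) (l : List α) :
    (everyOther b l).length = (l.length + b.toNat) / 2 := by
  induction l generalizing b with
  | nil => cases b <;> simp [Bool.toNat]
  | cons a l ih => cases b <;> simp [ih]; omega

lemma perm_everyOther_append (l : List α) : (everyOther true l ++ everyOther false l).Perm l := by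
  induction l with
  | nil => simp
  | cons a l ih => exact (perm_append_comm.trans ih).cons a

lemma mem_everyOther_iff {b : Bool} {l : List α} {x : α} :
    x ∈ everyOther b l ↔ ∃ (i : ℕ) (h : i < l.length), l[i] = x ∧ (Even i ↔ b = true) := by
  induction l generalizing b with
  | nil => simp
  | cons a l ih =>
    constructor
    · cases b
      · simp only [everyOther_false_cons, ih]
        rintro ⟨i, hi, rfl, hev⟩
        exact ⟨i + 1, by simpa using hi, rfl, by simpa [Nat.even_add_one] using hev⟩
      · simp only [everyOther_true_cons, mem_cons, ih]
        rintro (rfl | ⟨i, hi, rfl, hev⟩)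
        · exact ⟨0, by simp, rfl, by simp⟩
        · exact ⟨i + 1, by simpa using hi, rfl, by simp_all⟩
    · rintro ⟨_ | i, hi, rfl, hev⟩
      · cases b <;> simp_all
      · have hi' : i < l.length := by simpa using hi
        have : l[i] ∈ everyOther (!b) l :=
          ih.2 ⟨i, hi', rfl, by cases b <;> simp_all [Nat.even_add_one]⟩
        cases b
        · simpa using this
        · exact mem_cons_of_mem a this

lemma Nodup.disjoint_everyOther {l : List α} (hl : l.Nodup) :
    (everyOther true l).Disjoint (everyOther false l) :=
  disjoint_of_nodup_append ((perm_everyOther_append l).nodup_iff.mpr hl)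

end List

lemma Set.ncard_setOf_mem_of_nodup {α : Type*} {l : List α} (hl : l.Nodup) :
    {x | x ∈ l}.ncard = l.length := by
  classical
  rw [← List.coe_toFinset, Set.ncard_coe_finset, List.toFinset_card_of_nodup hl]

lemma Nat.even_of_forall_iff_not {n : ℕ} (P : ℕ → Prop)
    (hstep : ∀ i, i + 1 < n → (P i ↔ ¬ P (i + 1))) (hwrap : P (n - 1) ↔ ¬ P 0) : Even n := by
  have key : ∀ i < n, (P i ↔ (P 0 ↔ Even i)) := by
    intro i hi
    induction i with
    | zero => simp
    | succ i ih =>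
      have := ih (by omega)
      have := hstep i hi
      rw [Nat.even_add_one]
      tauto
  rcases n with _ | n
  · exact ⟨0, rfl⟩
  · rw [Nat.add_sub_cancel, key n (by omega)] at hwrap
    rw [Nat.even_add_one]
    tauto

open SimpleGraph

namespace IsMatchingSet

variable {G G' : SimpleGraph V} {M N : Set (Sym2 V)}

lemma mono (hGG' : G ≤ G') (hM : IsMatchingSet G M) : IsMatchingSet G' M :=
  ⟨hM.1.trans (edgeSet_mono hGG'), hM.2⟩

lemma anti (hM : IsMatchingSet G M) (hNM : N ⊆ M) : IsMatchingSet G N :=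
  ⟨hNM.trans hM.1, fun e he f hf => hM.2 e (hNM he) f (hNM hf)⟩

lemma ncard_setOf_mk_mem_le_one [Finite V] (hM : IsMatchingSet G M) (v : V) :
    {w | s(v, w) ∈ M}.ncard ≤ 1 := by
  refine (Set.ncard_le_one (Set.toFinite _)).mpr fun a ha b hb => ?_
  by_contra hab
  exact hM.2 _ ha _ hb (fun h => hab (Sym2.congr_right.mp h)) v
    ⟨Sym2.mem_mk_left v a, Sym2.mem_mk_left v b⟩

lemma two_mul_ncard_le [Finite V] (hM : IsMatchingSet G M) {S : Set V}
    (hS : ∀ e ∈ M, ∀ v ∈ e, v ∈ S) : 2 * M.ncard ≤ S.ncard := by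
  classical
  have := Fintype.ofFinite V
  calc 2 * M.ncard = ∑ e ∈ M.toFinset, e.toFinset.card := by
        rw [Finset.sum_congr rfl fun e he => Sym2.card_toFinset_of_not_isDiag e
          (G.not_isDiag_of_mem_edgeSet (hM.1 (Set.mem_toFinset.mp he))),
          Finset.sum_const, smul_eq_mul, Set.ncard_eq_toFinset_card', mul_comm]
    _ = (M.toFinset.biUnion Sym2.toFinset).card := by
        refine (Finset.card_biUnion fun e he f hf hef => Finset.disjoint_left.mpr
          fun v hve hvf => ?_).symm
        exact hM.2 e (Set.mem_toFinset.mp he) f (Set.mem_toFinset.mp hf) hef v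
          ⟨Sym2.mem_toFinset.mp hve, Sym2.mem_toFinset.mp hvf⟩
    _ ≤ S.toFinset.card := Finset.card_le_card fun v hv => by
        obtain ⟨e, he, hve⟩ := Finset.mem_biUnion.mp hv
        exact Set.mem_toFinset.mpr (hS e (Set.mem_toFinset.mp he) v (Sym2.mem_toFinset.mp hve))
    _ = S.ncard := (Set.ncard_eq_toFinset_card' S).symm

lemma mem_iff_notMem_of_mem_union (hM : IsMatchingSet G M) (hN : IsMatchingSet G N)
    {e f : Sym2 V} (he : e ∈ M ∪ N) (hf : f ∈ M ∪ N) (hef : e ≠ f) {v : V} (hve : v ∈ e)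
    (hvf : v ∈ f) : e ∈ M ↔ f ∉ M := by
  by_cases heM : e ∈ M <;> by_cases hfM : f ∈ M
  · exact absurd ⟨hve, hvf⟩ (hM.2 e heM f hfM hef v)
  · exact iff_of_true heM hfM
  · exact iff_of_false heM (not_not.mpr hfM)
  · exact absurd ⟨hve, hvf⟩ (hN.2 e (he.resolve_left heM) f (hf.resolve_left hfM) hef v)

end IsMatchingSet

namespace SimpleGraph.Walk

variable {G : SimpleGraph V} {u v : V}

lemma mk_getVert_mem_edges (p : G.Walk u v) {i : ℕ} (hi : i < p.length) :
    s(p.getVert i, p.getVert (i + 1)) ∈ p.edges :=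
  p.mk_mem_edges_iff_exists.mpr ⟨i, hi, rfl⟩

lemma mk_getVert_ne_of_edges_nodup {p : G.Walk u v} (hp : p.edges.Nodup) {i j : ℕ}
    (hi : i < p.length) (hj : j < p.length) (hij : i ≠ j) :
    s(p.getVert i, p.getVert (i + 1)) ≠ s(p.getVert j, p.getVert (j + 1)) := by
  rw [← getElem_edges (by simpa using hi), ← getElem_edges (by simpa using hj)]
  exact fun h => hij (hp.getElem_inj_iff.mp h)

/-- Edges at positions of equal parity are at least two steps apart. -/
lemma isMatchingSet_everyOther_edges (p : G.Walk u v) (b : Bool) {S : Set ℕ}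
    (hS : ∀ i < p.length, (Even i ↔ b = true) → i ∈ S ∧ i + 1 ∈ S)
    (hinj : Set.InjOn p.getVert S) : IsMatchingSet G {e | e ∈ p.edges.everyOther b} := by
  refine ⟨fun e he => ?_, ?_⟩
  · obtain ⟨i, hi, rfl, -⟩ := List.mem_everyOther_iff.mp he
    exact p.edges_subset_edgeSet (List.getElem_mem hi)
  rintro e he f hf hef x ⟨hxe, hxf⟩
  obtain ⟨i, hi, rfl, hie⟩ := List.mem_everyOther_iff.mp he
  obtain ⟨j, hj, rfl, hje⟩ := List.mem_everyOther_iff.mp hf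
  rw [getElem_edges] at hxe hxf
  rw [length_edges] at hi hj
  have hij : i ≠ j := by rintro rfl; exact hef rfl
  have hpar : Even i ↔ Even j := hie.trans hje.symm
  rw [Nat.even_iff, Nat.even_iff] at hpar
  obtain ⟨hiS, hi1S⟩ := hS i hi hie
  obtain ⟨hjS, hj1S⟩ := hS j hj hje
  rcases Sym2.mem_iff.mp hxe with rfl | rfl <;> rcases Sym2.mem_iff.mp hxf with h | h
  · have := hinj hiS hjS h; omega
  · have := hinj hiS hj1S h; omega
  · have := hinj hi1S hjS h; omega
  · have := hinj hi1S hj1S h; omega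

lemma IsPath.isMatchingSet_everyOther_edges {p : G.Walk u v} (hp : p.IsPath) (b : Bool) :
    IsMatchingSet G {e | e ∈ p.edges.everyOther b} :=
  p.isMatchingSet_everyOther_edges b (fun _ hi _ => ⟨hi.le, hi⟩) hp.getVert_injOn

lemma IsCycle.isMatchingSet_everyOther_edges {p : G.Walk u u} (hp : p.IsCycle)
    (heven : Even p.length) (b : Bool) : IsMatchingSet G {e | e ∈ p.edges.everyOther b} := by
  cases b
  · refine p.isMatchingSet_everyOther_edges false (fun i hi hodd => ?_) hp.getVert_injOn
    have : i ≠ 0 := by rintro rfl; simp at hodd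
    exact ⟨⟨by omega, by omega⟩, ⟨by omega, by omega⟩⟩
  · refine p.isMatchingSet_everyOther_edges true (fun i hi hev => ?_) hp.getVert_injOn'
    have : i + 1 ≠ p.length := by
      rintro h
      rw [← h, Nat.even_add_one] at heven
      exact heven (hev.mpr rfl)
    exact ⟨by simp only [Set.mem_ofPred_eq]; omega, by simp only [Set.mem_ofPred_eq]; omega⟩

/-- Consecutive edges of a cycle share a vertex, so they lie in different matchings: membership in
`M` alternates around the cycle, which forces its length to be even. -/
lemma IsCycle.even_length_of_edges_subset_union {p : G.Walk u u} (hp : p.IsCycle)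
    {G₀ : SimpleGraph V} {M N : Set (Sym2 V)} (hM : IsMatchingSet G₀ M)
    (hN : IsMatchingSet G₀ N) (hsub : ∀ e ∈ p.edges, e ∈ M ∪ N) : Even p.length := by
  have hL := hp.three_le_length
  have alt : ∀ i j, i < p.length → j < p.length → i ≠ j → ∀ x,
      x ∈ s(p.getVert i, p.getVert (i + 1)) → x ∈ s(p.getVert j, p.getVert (j + 1)) →
      (s(p.getVert i, p.getVert (i + 1)) ∈ M ↔ s(p.getVert j, p.getVert (j + 1)) ∉ M) :=
    fun i j hi hj hij x hxi hxj => hM.mem_iff_notMem_of_mem_union hN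
      (hsub _ (p.mk_getVert_mem_edges hi)) (hsub _ (p.mk_getVert_mem_edges hj))
      (mk_getVert_ne_of_edges_nodup hp.isTrail.edges_nodup hi hj hij) hxi hxj
  refine Nat.even_of_forall_iff_not (fun i => s(p.getVert i, p.getVert (i + 1)) ∈ M)
    (fun i hi => alt i (i + 1) (by omega) hi (by omega) _ (Sym2.mem_mk_right _ _)
      (Sym2.mem_mk_left _ _)) ?_
  refine alt (p.length - 1) 0 (by omega) (by omega) (by omega) u ?_ (by simp)
  rw [Nat.sub_add_cancel (by omega), getVert_length]
  exact Sym2.mem_mk_right _ _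

end SimpleGraph.Walk

namespace SimpleGraph

lemma sum_card_supp [Fintype V] (G : SimpleGraph V) [Fintype G.ConnectedComponent] :
    ∑ c : G.ConnectedComponent, Nat.card c.supp = Fintype.card V := by
  have h := Set.ncard_iUnion_of_finite (fun c : G.ConnectedComponent => Set.toFinite c.supp)
    G.pairwise_disjoint_supp_connectedComponent
  rw [iUnion_connectedComponentSupp, Set.ncard_univ, Nat.card_eq_fintype_card,
    finsum_eq_sum_of_fintype] at h
  simp only [Nat.card_coe_set_eq, h]

variable {G : SimpleGraph V}

def ConnectedComponent.edgeSet (c : G.ConnectedComponent) : Set (Sym2 V) :=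
  {e | e ∈ G.edgeSet ∧ ∀ v ∈ e, v ∈ c.supp}

lemma ConnectedComponent.disjoint_edgeSet {c d : G.ConnectedComponent} (hcd : c ≠ d) :
    Disjoint c.edgeSet d.edgeSet :=
  Set.disjoint_left.mpr fun e hc hd => hcd <|
    ((hc.2 _ (Sym2.out_fst_mem e)).symm.trans (hd.2 _ (Sym2.out_fst_mem e)) :)

lemma iUnion_connectedComponent_edgeSet : ⋃ c : G.ConnectedComponent, c.edgeSet = G.edgeSet := by
  refine Set.Subset.antisymm (Set.iUnion_subset fun c _ he => he.1) fun e he => ?_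
  induction e using Sym2.ind with
  | h x y =>
    refine Set.mem_iUnion.mpr ⟨G.connectedComponentMk x, he, fun v hv => ?_⟩
    rcases Sym2.mem_iff.mp hv with rfl | rfl
    · rfl
    · exact ConnectedComponent.eq.mpr (G.adj_symm he).reachable

lemma ncard_iUnion_of_subset_edgeSet [Finite V] [Fintype G.ConnectedComponent]
    {S : G.ConnectedComponent → Set (Sym2 V)} (hS : ∀ c, S c ⊆ c.edgeSet) :
    (⋃ c, S c).ncard = ∑ c, (S c).ncard := by
  rw [Set.ncard_iUnion_of_finite (fun _ => Set.toFinite _)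
    fun c d hcd => (ConnectedComponent.disjoint_edgeSet hcd).mono (hS c) (hS d),
    finsum_eq_sum_of_fintype]

end SimpleGraph

lemma IsMatchingSet.iUnion_connectedComponent {G : SimpleGraph V}
    {S : G.ConnectedComponent → Set (Sym2 V)} (hS : ∀ c, S c ⊆ c.edgeSet)
    (hM : ∀ c, IsMatchingSet G (S c)) : IsMatchingSet G (⋃ c, S c) := by
  refine ⟨Set.iUnion_subset fun c _ he => (hS c he).1, ?_⟩
  simp only [Set.mem_iUnion]
  rintro e ⟨c, hc⟩ f ⟨d, hd⟩ hef v ⟨hve, hvf⟩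
  obtain rfl : c = d := ((hS c hc).2 v hve).symm.trans ((hS d hd).2 v hvf)
  exact (hM c).2 e hc f hd hef v ⟨hve, hvf⟩

namespace SimpleGraph.Walk

variable {G : SimpleGraph V} {u v : V}

def ContainsIncidentEdges (p : G.Walk u v) : Prop :=
  ∀ x ∈ p.support, ∀ y, G.Adj x y → s(x, y) ∈ p.edges

namespace ContainsIncidentEdges

variable {p : G.Walk u v}

lemma supp_eq (hp : p.ContainsIncidentEdges) :
    (G.connectedComponentMk u).supp = {x | x ∈ p.support} := by
  have closed : ∀ {a b} (q : G.Walk a b), a ∈ p.support → b ∈ p.support := by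
    intro a b q
    induction q with
    | nil => exact id
    | cons h _ ih => exact fun ha => ih (p.snd_mem_support_of_mem_edges (hp _ ha _ h))
  ext x
  constructor
  · intro hx
    obtain ⟨q⟩ := (ConnectedComponent.eq.mp hx).symm
    exact closed q p.start_mem_support
  · intro hx
    classical
    exact ConnectedComponent.eq.mpr ⟨(p.takeUntil x hx).reverse⟩

lemma edgeSet_eq (hp : p.ContainsIncidentEdges) :
    (G.connectedComponentMk u).edgeSet = p.edgeSet := by
  ext e
  constructor
  · rintro ⟨he, hev⟩
    induction e using Sym2.ind with
    | h x y =>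
      have hx := hev x (Sym2.mem_mk_left x y)
      rw [hp.supp_eq] at hx
      exact hp x hx y he
  · intro he
    refine ⟨p.edges_subset_edgeSet he, fun x hx => ?_⟩
    rw [hp.supp_eq]
    exact p.mem_support_of_mem_edges he hx

lemma exists_matchings (hp : p.ContainsIncidentEdges) (hnodup : p.edges.Nodup)
    (hM : ∀ b, IsMatchingSet G {e | e ∈ p.edges.everyOther b}) :
    ∃ K K' : Set (Sym2 V), IsMatchingSet G K ∧ IsMatchingSet G K' ∧ Disjoint K K' ∧
      K ∪ K' = (G.connectedComponentMk u).edgeSet ∧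
      (G.connectedComponentMk u).edgeSet.ncard = p.length ∧ K.ncard = (p.length + 1) / 2 := by
  have hperm := p.edges.perm_everyOther_append
  refine ⟨_, _, hM true, hM false,
    Set.disjoint_left.mpr fun e h h' => hnodup.disjoint_everyOther h h', ?_, ?_, ?_⟩
  · ext e
    simp [hp.edgeSet_eq, ← List.mem_append, hperm.mem_iff]
  · rw [hp.edgeSet_eq, edgeSet, Set.ncard_setOf_mem_of_nodup hnodup, length_edges]
  · rw [Set.ncard_setOf_mem_of_nodup (hperm.nodup_iff.mpr hnodup).of_append_left,
      List.length_everyOther, length_edges, Bool.toNat_true]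

end ContainsIncidentEdges

lemma mk_mem_edges_of_degree'_le [Finite V] (p : G.Walk u v) {x y : V}
    (hx : degree' G x ≤ (p.toSubgraph.neighborSet x).ncard) (hxy : G.Adj x y) :
    s(x, y) ∈ p.edges := by
  have h : p.toSubgraph.neighborSet x = G.neighborSet x :=
    Set.eq_of_subset_of_ncard_le (p.toSubgraph.neighborSet_subset x)
      (by rwa [degree', Nat.card_coe_set_eq] at hx) (Set.toFinite _)
  exact adj_toSubgraph_iff_mem_edges.mp (h.symm ▸ hxy : y ∈ p.toSubgraph.neighborSet x)

lemma IsCycle.containsIncidentEdges [Finite V] (hdeg : ∀ x, degree' G x ≤ 2) {p : G.Walk u u}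
    (hp : p.IsCycle) : p.ContainsIncidentEdges := fun x hx _ hxy =>
  p.mk_mem_edges_of_degree'_le (by rw [hp.ncard_neighborSet_toSubgraph_eq_two hx]; exact hdeg x) hxy

/-- An edge from the start of a path back onto the path closes a cycle unless it is the path's own
first edge. -/
lemma IsPath.mk_start_mem_edges {p : G.Walk u v} (hp : p.IsPath)
    (hacyc : ∀ w : G.Walk u u, ¬ w.IsCycle) {y : V} (hy : G.Adj u y) (hyp : y ∈ p.support) :
    s(u, y) ∈ p.edges := by
  classical
  by_contra h
  apply hacyc (cons hy (p.takeUntil y hyp).reverse)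
  rw [cons_isCycle_iff, edges_reverse, List.mem_reverse]
  exact ⟨(hp.takeUntil hyp).reverse, fun h' => h (p.edges_takeUntil_subset_edges hyp h')⟩

/-- A longest path in an acyclic component contains every edge at its vertices: inner vertices
already have degree two on the path, and a further edge at an end would either extend the path or
close a cycle. -/
lemma exists_isPath_containsIncidentEdges [Finite V] (hdeg : ∀ x, degree' G x ≤ 2) (u : V)
    (hacyc : ∀ x, G.Reachable u x → ∀ w : G.Walk x x, ¬ w.IsCycle) :
    ∃ (a b : V) (p : G.Walk a b), G.Reachable u a ∧ p.IsPath ∧ p.ContainsIncidentEdges := by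
  cases nonempty_fintype V
  set L := {n | ∃ (a b : V) (p : G.Walk a b), G.Reachable u a ∧ p.IsPath ∧ p.length = n}
  have hbdd : BddAbove L :=
    ⟨Fintype.card V, by rintro _ ⟨a, b, p, -, hp, rfl⟩; exact hp.length_lt.le⟩
  have hne : L.Nonempty := ⟨0, u, u, nil, .rfl, .nil, rfl⟩
  obtain ⟨a, b, p, hua, hp, hlen⟩ := Nat.sSup_mem hne hbdd
  have hstart : ∀ {a' b'} (q : G.Walk a' b'), G.Reachable u a' → q.IsPath →
      q.length = p.length → ∀ y, G.Adj a' y → s(a', y) ∈ q.edges := by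
    intro a' b' q hua' hq hql y hy
    refine hq.mk_start_mem_edges (hacyc a' hua') hy ?_
    by_contra hyq
    have := le_csSup hbdd ⟨y, b', cons hy.symm q, hua'.trans hy.reachable, hq.cons hyq, rfl⟩
    rw [length_cons, hql, hlen] at this
    omega
  refine ⟨a, b, p, hua, hp, fun x hx y hxy => ?_⟩
  obtain ⟨i, rfl, hi⟩ := mem_support_iff_exists_getVert.mp hx
  rcases Nat.eq_zero_or_pos i with rfl | hi0
  · rw [getVert_zero] at hxy ⊢
    exact hstart p hua hp rfl y hxy
  rcases hi.lt_or_eq with hi | rfl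
  · refine p.mk_mem_edges_of_degree'_le ?_ hxy
    rw [hp.ncard_neighborSet_toSubgraph_internal_eq_two hi0.ne' hi]
    exact hdeg _
  · rw [getVert_length] at hxy ⊢
    simpa using hstart p.reverse (hua.trans p.reachable) hp.reverse (length_reverse p) y hxy

end SimpleGraph.Walk

namespace SimpleGraph

variable {G : SimpleGraph V}

open Classical in
lemma exists_matchings_of_connectedComponent [Finite V] (hdeg : ∀ v, degree' G v ≤ 2)
    (heven : ∀ (v : V) (w : G.Walk v v), w.IsCycle → Even w.length) (c : G.ConnectedComponent) :
    ∃ K K' : Set (Sym2 V), IsMatchingSet G K ∧ IsMatchingSet G K' ∧ Disjoint K K' ∧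
      K ∪ K' = c.edgeSet ∧
      c.edgeSet.ncard + (if IsPathComponent G c then 1 else 0) = Nat.card c.supp ∧
      2 * K.ncard + (if IsPathComponent G c ∧ Odd (Nat.card c.supp) then 1 else 0) =
        Nat.card c.supp := by
  by_cases hc : IsPathComponent G c
  · obtain ⟨u, rfl⟩ : ∃ u, G.connectedComponentMk u = c := c.exists_rep
    obtain ⟨a, b, p, hua, hp, hpe⟩ := Walk.exists_isPath_containsIncidentEdges hdeg u
      fun x hux => hc.2 x (ConnectedComponent.eq.mpr hux.symm)
    rw [ConnectedComponent.eq.mpr hua] at hc ⊢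
    obtain ⟨K, K', hK, hK', hKK', hun, hE, hKc⟩ :=
      hpe.exists_matchings hp.isTrail.edges_nodup hp.isMatchingSet_everyOther_edges
    have hsupp : Nat.card (G.connectedComponentMk a).supp = p.length + 1 := by
      rw [Nat.card_coe_set_eq, hpe.supp_eq, Set.ncard_setOf_mem_of_nodup hp.support_nodup,
        Walk.length_support]
    refine ⟨K, K', hK, hK', hKK', hun, by simp [hc, hE, hsupp], ?_⟩
    simp only [hc, true_and, hsupp, hKc, Nat.odd_iff]
    split_ifs <;> omega
  · obtain ⟨v, rfl, w, hw⟩ : ∃ v, G.connectedComponentMk v = c ∧ ∃ w : G.Walk v v, w.IsCycle := by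
      simpa [IsPathComponent, hdeg] using hc
    have hwe := hw.containsIncidentEdges hdeg
    obtain ⟨K, K', hK, hK', hKK', hun, hE, hKc⟩ := hwe.exists_matchings
      hw.isTrail.edges_nodup (hw.isMatchingSet_everyOther_edges (heven v w hw))
    have hsupp : Nat.card (G.connectedComponentMk v).supp = w.length := by
      have htail : {x | x ∈ w.support} = {x | x ∈ w.support.tail} := by
        ext x
        rw [Set.mem_ofPred_eq, ← Walk.cons_tail_support, List.mem_cons]
        exact or_iff_right_of_imp fun hx => hx ▸ Walk.end_mem_tail_support hw.not_nil
      rw [Nat.card_coe_set_eq, hwe.supp_eq, htail, Set.ncard_setOf_mem_of_nodup hw.support_nodup,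
        List.length_tail, Walk.length_support, Nat.add_sub_cancel]
    obtain ⟨k, hk⟩ := heven v w hw
    refine ⟨K, K', hK, hK', hKK', hun, by simp [hc, hE, hsupp], ?_⟩
    simp only [hc, false_and, if_false, hsupp, hKc]
    omega

lemma exists_matchings_of_degree'_le_two [Fintype V] (hdeg : ∀ v, degree' G v ≤ 2)
    (heven : ∀ (v : V) (w : G.Walk v v), w.IsCycle → Even w.length) :
    ∃ K K' : Set (Sym2 V), IsMatchingSet G K ∧ IsMatchingSet G K' ∧ Disjoint K K' ∧
      K ∪ K' = G.edgeSet ∧ G.edgeSet.ncard + pathCount G = Fintype.card V ∧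
      2 * K.ncard + evenPathCount G = Fintype.card V := by
  classical
  have := Fintype.ofFinite G.ConnectedComponent
  choose K K' hK hK' hKK' hun hE hKc using exists_matchings_of_connectedComponent hdeg heven
  have hsub : ∀ c, K c ⊆ c.edgeSet := fun c => hun c ▸ Set.subset_union_left
  have hsub' : ∀ c, K' c ⊆ c.edgeSet := fun c => hun c ▸ Set.subset_union_right
  refine ⟨⋃ c, K c, ⋃ c, K' c, .iUnion_connectedComponent hsub hK,
    .iUnion_connectedComponent hsub' hK', ?_, ?_, ?_, ?_⟩
  · refine Set.disjoint_iUnion_left.mpr fun c => Set.disjoint_iUnion_right.mpr fun d => ?_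
    obtain rfl | hcd := eq_or_ne c d
    · exact hKK' c
    · exact (ConnectedComponent.disjoint_edgeSet hcd).mono (hsub c) (hsub' d)
  · rw [← Set.iUnion_union_distrib, ← iUnion_connectedComponent_edgeSet]
    exact Set.iUnion_congr hun
  · rw [← iUnion_connectedComponent_edgeSet, ncard_iUnion_of_subset_edgeSet fun _ => subset_rfl,
      pathCount, Nat.card_eq_fintype_card, Fintype.card_subtype, Finset.card_filter,
      ← Finset.sum_add_distrib, ← sum_card_supp G]
    exact Finset.sum_congr rfl fun c _ => hE c
  · rw [ncard_iUnion_of_subset_edgeSet hsub, evenPathCount, Nat.card_eq_fintype_card,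
      Fintype.card_subtype, Finset.card_filter, Finset.mul_sum, ← Finset.sum_add_distrib,
      ← sum_card_supp G]
    exact Finset.sum_congr rfl fun c _ => hKc c

end SimpleGraph

/-- Inside a component with `k` vertices a matching has at most `⌊k / 2⌋` edges. -/
lemma IsMatchingSet.two_mul_ncard_add_evenPathCount_le [Fintype V] {G : SimpleGraph V}
    {M : Set (Sym2 V)} (hM : IsMatchingSet G M) :
    2 * M.ncard + evenPathCount G ≤ Fintype.card V := by
  classical
  have := Fintype.ofFinite G.ConnectedComponent
  have hcomp : ∀ c : G.ConnectedComponent, 2 * (M ∩ c.edgeSet).ncard +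
      (if IsPathComponent G c ∧ Odd (Nat.card c.supp) then 1 else 0) ≤ Nat.card c.supp := by
    intro c
    have h := (hM.anti Set.inter_subset_left).two_mul_ncard_le (S := c.supp)
      fun e (he : e ∈ M ∩ c.edgeSet) => he.2.2
    rw [Nat.card_coe_set_eq]
    split_ifs with hodd
    · obtain ⟨k, hk⟩ := hodd.2
      omega
    · omega
  have hM_eq : M = ⋃ c : G.ConnectedComponent, M ∩ c.edgeSet := by
    rw [← Set.inter_iUnion, iUnion_connectedComponent_edgeSet, Set.inter_eq_left.mpr hM.1]
  calc 2 * M.ncard + evenPathCount G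
      = ∑ c, (2 * (M ∩ c.edgeSet).ncard +
          (if IsPathComponent G c ∧ Odd (Nat.card c.supp) then 1 else 0)) := by
        rw [Finset.sum_add_distrib, ← Finset.mul_sum, ← ncard_iUnion_of_subset_edgeSet
          fun _ => Set.inter_subset_right, ← hM_eq, evenPathCount, Nat.card_eq_fintype_card,
          Fintype.card_subtype, Finset.card_filter]
    _ ≤ ∑ c : G.ConnectedComponent, Nat.card c.supp := Finset.sum_le_sum fun c _ => hcomp c
    _ = Fintype.card V := sum_card_supp G

section UnionOfMatchings

variable {G : SimpleGraph V} {M N : Set (Sym2 V)}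

lemma edgeSet_fromEdgeSet_union (hM : IsMatchingSet G M) (hN : IsMatchingSet G N) :
    (fromEdgeSet (M ∪ N)).edgeSet = M ∪ N := by
  rw [edgeSet_fromEdgeSet, sdiff_eq_left]
  exact Set.disjoint_left.mpr fun e he =>
    G.not_isDiag_of_mem_edgeSet (Set.union_subset hM.1 hN.1 he)

lemma isPec_fromEdgeSet_union [Finite V] (hM : IsMatchingSet G M) (hN : IsMatchingSet G N) :
    IsPec G (fromEdgeSet (M ∪ N)) := by
  have hE := edgeSet_fromEdgeSet_union hM hN
  refine ⟨fun x y hxy => Set.union_subset hM.1 hN.1 (hE ▸ hxy : s(x, y) ∈ M ∪ N), fun v => ?_,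
    fun v w hw => hw.even_length_of_edges_subset_union hM hN fun e he =>
      hE ▸ w.edges_subset_edgeSet he⟩
  calc degree' (fromEdgeSet (M ∪ N)) v
      = ({w | s(v, w) ∈ M} ∪ {w | s(v, w) ∈ N}).ncard := by
        rw [degree', Nat.card_coe_set_eq]
        congr 1
        ext w
        exact (Set.ext_iff.mp hE s(v, w) :)
    _ ≤ 1 + 1 := (Set.ncard_union_le _ _).trans
        (add_le_add (hM.ncard_setOf_mk_mem_le_one v) (hN.ncard_setOf_mk_mem_le_one v))

lemma pathCount_fromEdgeSet_union [Fintype V] (hM : IsMatchingSet G M) (hN : IsMatchingSet G N)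
    (hMN : Disjoint M N) :
    pathCount (fromEdgeSet (M ∪ N)) + M.ncard + N.ncard = Fintype.card V := by
  have hpec := isPec_fromEdgeSet_union hM hN
  obtain ⟨-, -, -, -, -, -, hE, -⟩ := exists_matchings_of_degree'_le_two hpec.2.1 hpec.2.2
  rw [edgeSet_fromEdgeSet_union hM hN, Set.ncard_union_eq hMN] at hE
  omega

end UnionOfMatchings

lemma IsPec.exists_matchings [Fintype V] {G G' : SimpleGraph V} (hG' : IsPec G G') :
    ∃ K K' : Set (Sym2 V), IsMatchingSet G K ∧ IsMatchingSet G K' ∧ Disjoint K K' ∧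
      K.ncard + K'.ncard + pathCount G' = Fintype.card V ∧
      2 * K.ncard + evenPathCount G' = Fintype.card V := by
  obtain ⟨K, K', hK, hK', hKK', hun, hE, hKe⟩ := exists_matchings_of_degree'_le_two hG'.2.1 hG'.2.2
  rw [← hun, Set.ncard_union_eq hKK'] at hE
  exact ⟨K, K', hK.mono hG'.1, hK'.mono hG'.1, hKK', hE, hKe⟩

section ExtremalParameters

variable (G : SimpleGraph V)

lemma isPec_bot : IsPec G ⊥ := by
  refine ⟨bot_le, fun v => ?_, fun v w hw => ?_⟩
  · simp [degree']
  · cases w with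
    | nil => exact (Walk.not_isCycle_nil hw).elim
    | cons h _ => exact h.elim

lemma exists_pMin_eq : ∃ G', IsPec G G' ∧ pathCount G' = pMin G :=
  Nat.sInf_mem (s := {n | ∃ G', IsPec G G' ∧ pathCount G' = n}) ⟨_, ⊥, isPec_bot G, rfl⟩

lemma pMin_le {G' : SimpleGraph V} (hG' : IsPec G G') : pMin G ≤ pathCount G' :=
  Nat.sInf_le ⟨G', hG', rfl⟩

lemma exists_epMin_eq :
    ∃ G', IsPec G G' ∧ pathCount G' = pMin G ∧ evenPathCount G' = epMin G := by
  obtain ⟨G', hG', hp⟩ := exists_pMin_eq G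
  exact Nat.sInf_mem (s := {n | ∃ G', IsPec G G' ∧ pathCount G' = pMin G ∧ evenPathCount G' = n})
    ⟨_, G', hG', hp, rfl⟩

lemma epMin_le {G' : SimpleGraph V} (hG' : IsPec G G') (hp : pathCount G' = pMin G) :
    epMin G ≤ evenPathCount G' :=
  Nat.sInf_le ⟨G', hG', hp, rfl⟩

variable [Finite V]

lemma bddAbove_lambdaParam : BddAbove {n | ∃ H H' : Set (Sym2 V), IsMatchingSet G H ∧
    IsMatchingSet G H' ∧ Disjoint H H' ∧ H.ncard + H'.ncard = n} :=
  ⟨2 * Nat.card (Sym2 V), by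
    rintro _ ⟨H, H', -, -, -, rfl⟩
    linarith [H.ncard_le_card, H'.ncard_le_card]⟩

lemma exists_lambdaParam_eq : ∃ H H' : Set (Sym2 V), IsMatchingSet G H ∧ IsMatchingSet G H' ∧
    Disjoint H H' ∧ H.ncard + H'.ncard = lambdaParam G := by
  have hempty : IsMatchingSet G ∅ := ⟨Set.empty_subset _, by simp⟩
  refine Nat.sSup_mem ?_ (bddAbove_lambdaParam G)
  exact ⟨0, ∅, ∅, hempty, hempty, Set.disjoint_empty _, by simp⟩

lemma le_lambdaParam {H H' : Set (Sym2 V)} (hH : IsMatchingSet G H) (hH' : IsMatchingSet G H')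
    (hHH' : Disjoint H H') : H.ncard + H'.ncard ≤ lambdaParam G :=
  le_csSup (bddAbove_lambdaParam G) ⟨H, H', hH, hH', hHH', rfl⟩

lemma bddAbove_muParam : BddAbove {n | ∃ H H' : Set (Sym2 V), IsMatchingSet G H ∧
    IsMatchingSet G H' ∧ Disjoint H H' ∧ H.ncard + H'.ncard = lambdaParam G ∧ H.ncard = n} :=
  ⟨Nat.card (Sym2 V), by rintro _ ⟨H, -, -, -, -, -, rfl⟩; exact H.ncard_le_card⟩

lemma exists_muParam_eq : ∃ H H' : Set (Sym2 V), IsMatchingSet G H ∧ IsMatchingSet G H' ∧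
    Disjoint H H' ∧ H.ncard + H'.ncard = lambdaParam G ∧ H.ncard = muParam G := by
  obtain ⟨H, H', hH, hH', hHH', hlam⟩ := exists_lambdaParam_eq G
  refine Nat.sSup_mem ?_ (bddAbove_muParam G)
  exact ⟨_, H, H', hH, hH', hHH', hlam, rfl⟩

lemma le_muParam {H H' : Set (Sym2 V)} (hH : IsMatchingSet G H) (hH' : IsMatchingSet G H')
    (hHH' : Disjoint H H') (hlam : H.ncard + H'.ncard = lambdaParam G) : H.ncard ≤ muParam G :=
  le_csSup (bddAbove_muParam G) ⟨H, H', hH, hH', hHH', hlam, rfl⟩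

end ExtremalParameters

lemma lambdaParam_add_pMin [Fintype V] (G : SimpleGraph V) :
    lambdaParam G + pMin G = Fintype.card V := by
  obtain ⟨G₀, hG₀, hp₀⟩ := exists_pMin_eq G
  obtain ⟨K, K', hK, hK', hKK', hK₀, -⟩ := hG₀.exists_matchings
  have hlam := le_lambdaParam G hK hK' hKK'
  obtain ⟨H, H', hH, hH', hHH', hlamH⟩ := exists_lambdaParam_eq G
  have hp := pMin_le G (isPec_fromEdgeSet_union hH hH')
  have hpH := pathCount_fromEdgeSet_union hH hH' hHH'
  omega

/-- For every finite graph `G` on `n` vertices, μ(G) = (n − e_p(G))/2,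
stated subtraction/division-free as 2·μ(G) + e_p(G) = n. -/
theorem stmt_6 [Fintype V] (G : SimpleGraph V) :
    2 * muParam G + epMin G = Fintype.card V := by
  have hlam_p := lambdaParam_add_pMin G
  obtain ⟨H, H', hH, hH', hHH', hlam, hmu⟩ := exists_muParam_eq G
  have hp := pathCount_fromEdgeSet_union hH hH' hHH'
  have hep := epMin_le G (isPec_fromEdgeSet_union hH hH') (by omega)
  have hH_sub : IsMatchingSet (fromEdgeSet (H ∪ H')) H :=
    ⟨by rw [edgeSet_fromEdgeSet_union hH hH']; exact Set.subset_union_left, hH.2⟩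
  have hle := hH_sub.two_mul_ncard_add_evenPathCount_le
  obtain ⟨G', hG', hpG', heG'⟩ := exists_epMin_eq G
  obtain ⟨K, K', hK, hK', hKK', hKp, hKe⟩ := hG'.exists_matchings
  have hmuK := le_muParam G hK hK' hKK' (by omega)
  omega
end

section
/- Let G be a finite connected graph and let M, H, H' be maximally intersecting matchings in G. Then every end-edge of a maximal M-H alternating path belongs to H'. -/
variable {V : Type*}

/-- A list of edges alternately lies in `A ∖ B` and `B ∖ A`. -/
def AltList (A B : Set (Sym2 V)) (l : List (Sym2 V)) : Prop :=
  (∀ e ∈ l, (e ∈ A ∧ e ∉ B) ∨ (e ∈ B ∧ e ∉ A)) ∧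
  List.Chain' (fun e f => ¬(e ∈ A ↔ f ∈ A)) l

/-- An `A`-`B` alternating path in `G`: a (nontrivial) path whose edges alternately lie in
`A ∖ B` and `B ∖ A`. -/
def IsAltPath (G : SimpleGraph V) (A B : Set (Sym2 V)) {u v : V} (p : G.Walk u v) : Prop :=
  0 < p.length ∧ p.IsPath ∧ AltList A B p.edges

/-- A maximal `A`-`B` alternating path: an alternating path that cannot be extended to a
longer alternating path at either of its ends. -/
def IsMaxAltPath (G : SimpleGraph V) (A B : Set (Sym2 V)) {u v : V} (p : G.Walk u v) : Prop :=
  IsAltPath G A B p ∧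
  (∀ w, ∀ h : G.Adj w u, ¬ IsAltPath G A B (SimpleGraph.Walk.cons h p)) ∧
  (∀ w, ∀ h : G.Adj w v, ¬ IsAltPath G A B (SimpleGraph.Walk.cons h p.reverse))

/-- `M` is a maximum matching of `G`. -/
def IsMaxMatching (G : SimpleGraph V) (M : Set (Sym2 V)) : Prop :=
  IsMatchingSet G M ∧ ∀ M' : Set (Sym2 V), IsMatchingSet G M' → M'.ncard ≤ M.ncard

/-- `(H, H')` is a pair of disjoint matchings of `G` with `|H| + |H'| = λ(G)` and
`|H| = μ(G)`. -/
def IsLambdaMuPair (G : SimpleGraph V) (H H' : Set (Sym2 V)) : Prop :=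
  IsMatchingSet G H ∧ IsMatchingSet G H' ∧ Disjoint H H' ∧
  H.ncard + H'.ncard = lambdaParam G ∧ H.ncard = muParam G

/-- The matchings `M`, `H`, `H'` are maximally intersecting:
(i) `M` is a maximum matching; (ii) `(H, H') ∈ Λ(G)` with `|H| = μ(G)`;
(iii) `|M ∩ (H ∪ H')|` is maximum among all such triples;
(iv) `|M ∩ H|` is maximum among all such triples also satisfying (iii). -/
def MaxIntersecting (G : SimpleGraph V) (M H H' : Set (Sym2 V)) : Prop :=
  IsMaxMatching G M ∧ IsLambdaMuPair G H H' ∧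
  (∀ M₂ H₂ H₂' : Set (Sym2 V), IsMaxMatching G M₂ → IsLambdaMuPair G H₂ H₂' →
    (M₂ ∩ (H₂ ∪ H₂')).ncard ≤ (M ∩ (H ∪ H')).ncard) ∧
  (∀ M₂ H₂ H₂' : Set (Sym2 V), IsMaxMatching G M₂ → IsLambdaMuPair G H₂ H₂' →
    (M₂ ∩ (H₂ ∪ H₂')).ncard = (M ∩ (H ∪ H')).ncard → (M₂ ∩ H₂).ncard ≤ (M ∩ H).ncard)

/-!
Let `p` be a maximal `M`-`H` alternating path from `u` to `v` with first edge `e₁`. An edge at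
`u` that could extend `p` must return to `p`; as every internal vertex of `p` is covered by path
edges of both kinds, it can only be `s(u, v)`, closing `p` into an alternating cycle. Exchanging
`M` along `p` or along such a cycle gives another matching which, when it is again maximum, gains
edges of `H` and loses at most as many edges of `H'`, so (iii) and (iv) forbid it.
This shows in turn: if `e₁ ∈ H` then `u` is not covered by `M`; hence `e₁ ∉ H`, since otherwise
exchanging `M` along `p` either augments `M` or is forbidden; so both end edges of `p` lie in `M`,
and then `u` is not covered by `H`. Finally, if `e₁ ∉ H'`, replacing in `H` the second edge of
`p` by `e₁` (or just adding `e₁` to `H` when `p` is a single edge) contradicts (iii) or the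
maximality of `λ(G)`.
-/

namespace IsMatchingSet

variable {G : SimpleGraph V} {M C : Set (Sym2 V)}

theorem eq_of_mem_of_mem (hM : IsMatchingSet G M) {e f : Sym2 V} {w : V} (he : e ∈ M)
    (hf : f ∈ M) (hwe : w ∈ e) (hwf : w ∈ f) : e = f := by
  by_contra hne
  exact hM.2 e he f hf hne w ⟨hwe, hwf⟩

theorem subset {N : Set (Sym2 V)} (hM : IsMatchingSet G M) (hNM : N ⊆ M) : IsMatchingSet G N :=
  ⟨hNM.trans hM.1, fun e he f hf => hM.2 e (hNM he) f (hNM hf)⟩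

theorem insert {e : Sym2 V} (hM : IsMatchingSet G M) (he : e ∈ G.edgeSet)
    (hfree : ∀ f ∈ M, ∀ w ∈ e, w ∉ f) : IsMatchingSet G (insert e M) := by
  refine ⟨Set.insert_subset he hM.1, ?_⟩
  rintro f (rfl | hf) g (rfl | hg) hfg w ⟨hwf, hwg⟩
  · exact hfg rfl
  · exact hfree g hg w hwf hwg
  · exact hfree f hf w hwg hwf
  · exact hM.2 f hf g hg hfg w ⟨hwf, hwg⟩

theorem symmDiff (hM : IsMatchingSet G M) (hCM : IsMatchingSet G (C \ M))
    (hcov : ∀ t ∈ C \ M, ∀ w ∈ t, ∀ e ∈ M, w ∈ e → e ∈ C) :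
    IsMatchingSet G (symmDiff M C) := by
  refine ⟨Set.union_subset (Set.sdiff_subset.trans hM.1) hCM.1, ?_⟩
  rintro e (he | he) f (hf | hf) hef w ⟨hwe, hwf⟩
  · exact hM.2 e he.1 f hf.1 hef w ⟨hwe, hwf⟩
  · exact he.2 (hcov f hf w hwf e he.1 hwe)
  · exact hf.2 (hcov e he w hwe f hf.1 hwf)
  · exact hCM.2 e he f hf hef w ⟨hwe, hwf⟩

end IsMatchingSet

theorem Set.ncard_symmDiff_add_ncard_inter {α : Type*} [Finite α] (M C : Set α) :
    (symmDiff M C).ncard + (C ∩ M).ncard = M.ncard + (C \ M).ncard := by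
  rw [Set.symmDiff_def, Set.ncard_union_eq disjoint_sdiff_sdiff, Set.inter_comm, add_right_comm,
    add_comm (M \ C).ncard, Set.ncard_inter_add_ncard_sdiff_eq_ncard]

theorem Set.ncard_symmDiff_inter_add_ncard_inter {α : Type*} [Finite α] (M C X : Set α) :
    (symmDiff M C ∩ X).ncard + (C ∩ M ∩ X).ncard = (M ∩ X).ncard + (C \ M ∩ X).ncard := by
  have h := Set.ncard_symmDiff_add_ncard_inter (M ∩ X) (C ∩ X)
  rw [← Set.inter_symmDiff_distrib_right] at h
  convert h using 3 <;> ext <;> simp only [Set.mem_inter_iff, Set.mem_sdiff] <;> tauto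

theorem List.countP_add_one_of_isChain {α : Type*} {q : α → Prop} [DecidablePred q]
    {l : List α} (hl : l.IsChain fun x y => ¬(q x ↔ q y)) {a b : α} (ha : l.head? = some a)
    (hb : l.getLast? = some b) :
    l.countP (q ·) + 1 = l.countP (¬q ·) + (if q a then 1 else 0) + (if q b then 1 else 0) := by
  induction l generalizing a with
  | nil => simp at ha
  | cons x t ih =>
    obtain rfl : x = a := by simpa using ha
    cases t with
    | nil =>
      obtain rfl : x = b := by simpa using hb
      by_cases hx : q x <;> simp [hx]
    | cons y r =>
      rw [List.isChain_cons_cons] at hl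
      have := ih hl.2 rfl (by simpa using hb)
      by_cases hx : q x <;> by_cases hy : q y <;> simp_all [List.countP_cons]; omega

namespace SimpleGraph.Walk

variable {G : SimpleGraph V} {u v w : V}

theorem start_mem_of_head?_edges {p : G.Walk u v} {e : Sym2 V} (he : p.edges.head? = some e) :
    u ∈ e := by
  cases p with
  | nil => simp at he
  | cons h q =>
    rw [edges_cons, List.head?_cons, Option.some.injEq] at he
    exact he ▸ Sym2.mem_mk_left _ _

theorem head?_edges_reverse (p : G.Walk u v) : p.reverse.edges.head? = p.edges.getLast? := by
  rw [edges_reverse, List.head?_reverse]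

theorem getLast?_edges_reverse (p : G.Walk u v) : p.reverse.edges.getLast? = p.edges.head? := by
  rw [edges_reverse, List.getLast?_reverse]

theorem end_mem_of_getLast?_edges {p : G.Walk u v} {e : Sym2 V}
    (he : p.edges.getLast? = some e) : v ∈ e :=
  start_mem_of_head?_edges (p := p.reverse) (by rwa [head?_edges_reverse])

theorem IsPath.head?_edges_eq_of_mem {p : G.Walk u v} (hp : p.IsPath) {f : Sym2 V}
    (hf : f ∈ p.edges) (hu : u ∈ f) : p.edges.head? = some f := by
  cases p with
  | nil => simp at hf
  | cons h q =>
    rw [edges_cons] at hf ⊢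
    rcases List.mem_cons.mp hf with rfl | hf
    · rfl
    · exact absurd (q.mem_support_of_mem_edges hf hu) ((cons_isPath_iff _ _).mp hp).2

theorem IsPath.eq_of_head?_edges {p : G.Walk u v} (hp : p.IsPath) {e f : Sym2 V}
    (he : p.edges.head? = some e) (hf : f ∈ p.edges) (hu : u ∈ f) : f = e :=
  Option.some.inj ((hp.head?_edges_eq_of_mem hf hu).symm.trans he)

theorem IsPath.eq_of_getLast?_edges {p : G.Walk u v} (hp : p.IsPath) {e f : Sym2 V}
    (he : p.edges.getLast? = some e) (hf : f ∈ p.edges) (hv : v ∈ f) : f = e :=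
  hp.reverse.eq_of_head?_edges (by rwa [head?_edges_reverse]) (by simpa using hf) hv

/-- In a path, two distinct edges sharing a vertex are consecutive. -/
theorem IsPath.rel_of_mem_edges {R : Sym2 V → Sym2 V → Prop} {p : G.Walk u v} (hp : p.IsPath)
    (hR : p.edges.IsChain R) {e f : Sym2 V} (he : e ∈ p.edges) (hf : f ∈ p.edges) (hef : e ≠ f)
    (hwe : w ∈ e) (hwf : w ∈ f) : R e f ∨ R f e := by
  induction p with
  | nil => simp at he
  | @cons a b _ h q ih =>
    rw [edges_cons] at he hf hR
    rw [cons_isPath_iff] at hp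
    rw [List.isChain_cons] at hR
    have first : ∀ {g}, g ∈ q.edges → w ∈ g → w ∈ s(a, b) → R s(a, b) g := by
      intro g hg hwg hw
      rcases Sym2.mem_iff.mp hw with rfl | rfl
      · exact absurd (q.mem_support_of_mem_edges hg hwg) hp.2
      · exact hR.1 g (hp.1.head?_edges_eq_of_mem hg hwg)
    rcases List.mem_cons.mp he with rfl | he <;> rcases List.mem_cons.mp hf with rfl | hf
    · exact absurd rfl hef
    · exact Or.inl (first hf hwf hwe)
    · exact Or.inr (first he hwe hwf)
    · exact ih hp.1 hR.2 he hf

theorem exists_rel_of_mem_support {R : Sym2 V → Sym2 V → Prop} {p : G.Walk u v}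
    (hR : p.edges.IsChain R) (hw : w ∈ p.support) (hwu : w ≠ u) (hwv : w ≠ v) :
    ∃ e ∈ p.edges, ∃ f ∈ p.edges, w ∈ e ∧ w ∈ f ∧ R e f := by
  induction p with
  | nil => exact absurd (by simpa using hw) hwu
  | @cons a b _ h q ih =>
    rw [support_cons, List.mem_cons] at hw
    rw [edges_cons] at hR ⊢
    rcases hw with rfl | hw
    · exact absurd rfl hwu
    by_cases hwb : w = b
    · subst hwb
      cases q with
      | nil => exact absurd rfl hwv
      | cons h' r =>
        rw [edges_cons, List.isChain_cons_cons] at hR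
        exact ⟨_, by simp, _, by simp, by simp, by simp, hR.1⟩
    · obtain ⟨e, he, f, hf, hrel⟩ := ih (List.isChain_cons.mp hR).2 hw hwb hwv
      exact ⟨e, List.mem_cons_of_mem _ he, f, List.mem_cons_of_mem _ hf, hrel⟩

theorem ncard_setOf_mem_edges {p : G.Walk u v} (hp : p.IsPath) (q : Sym2 V → Prop)
    [DecidablePred q] : {e | e ∈ p.edges ∧ q e}.ncard = p.edges.countP (q ·) := by
  classical
  have : {e | e ∈ p.edges ∧ q e} = ↑(p.edges.filter (q ·)).toFinset := by ext; simp
  rw [this, Set.ncard_coe_finset, List.toFinset_card_of_nodup (hp.edges_nodup.filter _),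
    List.countP_eq_length_filter]

end SimpleGraph.Walk

open SimpleGraph.Walk

theorem AltList.symm {A B : Set (Sym2 V)} {l : List (Sym2 V)} (h : AltList A B l) :
    AltList B A l := by
  refine ⟨fun e he => (h.1 e he).symm, h.2.imp_of_mem_imp fun e f he hf hef => ?_⟩
  have := h.1 e he
  have := h.1 f hf
  tauto

theorem AltList.reverse {A B : Set (Sym2 V)} {l : List (Sym2 V)} (h : AltList A B l) :
    AltList A B l.reverse :=
  ⟨fun e he => h.1 e (List.mem_reverse.mp he),
    List.isChain_reverse.mpr (h.2.imp fun e f hef => by tauto)⟩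

namespace IsAltPath

variable {G : SimpleGraph V} {A B : Set (Sym2 V)} {u v : V} {p : G.Walk u v}

theorem reverse (hp : IsAltPath G A B p) : IsAltPath G A B p.reverse :=
  ⟨by simpa using hp.1, hp.2.1.reverse, by rw [edges_reverse]; exact hp.2.2.reverse⟩

theorem symm (hp : IsAltPath G A B p) : IsAltPath G B A p :=
  ⟨hp.1, hp.2.1, hp.2.2.symm⟩

theorem edgeSet_subset_symmDiff (hp : IsAltPath G A B p) : p.edgeSet ⊆ symmDiff A B :=
  fun e he => hp.2.2.1 e he

theorem mem_iff_notMem (hp : IsAltPath G A B p) {e : Sym2 V} (he : e ∈ p.edges) :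
    e ∈ A ↔ e ∉ B := by
  have := hp.2.2.1 e he
  tauto

theorem isMatchingSet_edgeSet_sdiff (hp : IsAltPath G A B p) :
    IsMatchingSet G (p.edgeSet \ A) := by
  refine ⟨fun e he => p.edges_subset_edgeSet he.1, fun e he f hf hef w ⟨hwe, hwf⟩ => ?_⟩
  have := hp.2.1.rel_of_mem_edges hp.2.2.2 he.1 hf.1 hef hwe hwf
  exact this.elim (fun h => h (iff_of_false he.2 hf.2)) fun h => h (iff_of_false hf.2 he.2)

theorem mem_edges_of_mem (hp : IsAltPath G A B p) (hA : IsMatchingSet G A) {w : V}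
    (hw : w ∈ p.support) (hwu : w ≠ u) (hwv : w ≠ v) {e : Sym2 V} (he : e ∈ A) (hwe : w ∈ e) :
    e ∈ p.edges := by
  obtain ⟨f, hf, g, hg, hwf, hwg, hfg⟩ := exists_rel_of_mem_support hp.2.2.2 hw hwu hwv
  by_cases hfA : f ∈ A
  · exact hA.eq_of_mem_of_mem he hfA hwe hwf ▸ hf
  · exact hA.eq_of_mem_of_mem he (by tauto) hwe hwg ▸ hg

theorem ncard_inter_add_one [DecidablePred (· ∈ A)] (hp : IsAltPath G A B p) {e₁ eₖ : Sym2 V}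
    (he₁ : p.edges.head? = some e₁) (heₖ : p.edges.getLast? = some eₖ) :
    (p.edgeSet ∩ A).ncard + 1 =
      (p.edgeSet \ A).ncard + (if e₁ ∈ A then 1 else 0) + (if eₖ ∈ A then 1 else 0) := by
  rw [show p.edgeSet ∩ A = {e | e ∈ p.edges ∧ e ∈ A} from rfl,
    show p.edgeSet \ A = {e | e ∈ p.edges ∧ e ∉ A} from rfl, ncard_setOf_mem_edges hp.2.1,
    ncard_setOf_mem_edges hp.2.1]
  exact List.countP_add_one_of_isChain hp.2.2.2 he₁ heₖ

theorem isMatchingSet_symmDiff (hp : IsAltPath G A B p) (hA : IsMatchingSet G A)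
    {C : Set (Sym2 V)} (hPC : p.edgeSet ⊆ C) (hC : C ⊆ insert s(u, v) p.edgeSet)
    (hCA : IsMatchingSet G (C \ A)) (hu : ∀ e ∈ A, u ∈ e → e ∈ C)
    (hv : ∀ e ∈ A, v ∈ e → e ∈ C) : IsMatchingSet G (symmDiff A C) := by
  refine hA.symmDiff hCA fun t ht w hwt e he hwe => ?_
  by_cases hwu : w = u
  · exact hu e he (hwu ▸ hwe)
  by_cases hwv : w = v
  · exact hv e he (hwv ▸ hwe)
  have hw : w ∈ p.support := by
    rcases hC ht.1 with rfl | htp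
    · rcases Sym2.mem_iff.mp hwt with rfl | rfl
      exacts [absurd rfl hwu, absurd rfl hwv]
    · exact p.mem_support_of_mem_edges htp hwt
  exact hPC (hp.mem_edges_of_mem hA hw hwu hwv he hwe)

end IsAltPath

namespace IsMaxAltPath

variable {G : SimpleGraph V} {A B : Set (Sym2 V)} {u v : V} {p : G.Walk u v}

theorem reverse (hp : IsMaxAltPath G A B p) : IsMaxAltPath G A B p.reverse :=
  ⟨hp.1.reverse, hp.2.2, by simpa using hp.2.1⟩

theorem symm (hp : IsMaxAltPath G A B p) : IsMaxAltPath G B A p :=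
  ⟨hp.1.symm, fun w h hc => hp.2.1 w h hc.symm, fun w h hc => hp.2.2 w h hc.symm⟩

/-- An edge of `A ∖ B` at the start of a maximal path whose first edge is not in `A` would
extend the path; so it must close the path into a cycle. -/
theorem eq_of_start_mem (hp : IsMaxAltPath G A B p) (hA : IsMatchingSet G A) {e f : Sym2 V}
    (he : p.edges.head? = some e) (heA : e ∉ A) (hfA : f ∈ A) (hfB : f ∉ B) (hfu : u ∈ f) :
    f = s(u, v) := by
  obtain ⟨w, rfl⟩ := Sym2.mem_iff_exists.mp hfu
  have hadj : G.Adj u w := hA.1 hfA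
  have hw : w ∈ p.support := by
    by_contra hw
    refine hp.2.1 w hadj.symm ⟨by simp, (cons_isPath_iff _ _).mpr ⟨hp.1.2.1, hw⟩, ?_, ?_⟩
    · intro g hg
      rw [edges_cons, List.mem_cons] at hg
      rcases hg with rfl | hg
      · exact Or.inl ⟨Sym2.eq_swap ▸ hfA, Sym2.eq_swap ▸ hfB⟩
      · exact hp.1.2.2.1 g hg
    · rw [edges_cons, List.Chain', List.isChain_cons, he]
      refine ⟨fun g hg => ?_, hp.1.2.2.2⟩
      obtain rfl := Option.mem_some_iff.mp hg
      simpa [Sym2.eq_swap, hfA] using heA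
  by_cases hwv : w = v
  · rw [hwv]
  have hfp := hp.1.mem_edges_of_mem hA hw hadj.ne' hwv hfA (Sym2.mem_mk_right u w)
  exact absurd (hp.1.2.1.eq_of_head?_edges he hfp (Sym2.mem_mk_left u w) ▸ hfA) heA

end IsMaxAltPath

theorem MaxIntersecting.isMatchingSet_M {G : SimpleGraph V} {M H H' : Set (Sym2 V)}
    (hmax : MaxIntersecting G M H H') :
    IsMatchingSet G M :=
  hmax.1.1

theorem MaxIntersecting.isMatchingSet_H {G : SimpleGraph V} {M H H' : Set (Sym2 V)}
    (hmax : MaxIntersecting G M H H') :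
    IsMatchingSet G H :=
  hmax.2.1.1

section Finite

variable [Finite V] {G : SimpleGraph V} {M H H' C : Set (Sym2 V)} {e e₁ eₖ : Sym2 V}
  {u v : V} {p : G.Walk u v}

theorem ncard_add_ncard_le_lambdaParam (hH : IsMatchingSet G H)
    (hH' : IsMatchingSet G H') (hdisj : Disjoint H H') : H.ncard + H'.ncard ≤ lambdaParam G := by
  refine le_csSup ⟨2 * Nat.card (Sym2 V), ?_⟩ ⟨H, H', hH, hH', hdisj, rfl⟩
  rintro n ⟨A, B, -, -, -, rfl⟩
  have hA := Set.ncard_le_card A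
  have hB := Set.ncard_le_card B
  omega

theorem IsLambdaMuPair.not_isMatchingSet_insert (hpair : IsLambdaMuPair G H H') (heH : e ∉ H)
    (heH' : e ∉ H') : ¬IsMatchingSet G (insert e H) := by
  intro hmatch
  have := ncard_add_ncard_le_lambdaParam hmatch hpair.2.1
    (Set.disjoint_insert_left.mpr ⟨heH', hpair.2.2.1⟩)
  rw [Set.ncard_insert_of_notMem heH] at this
  have := hpair.2.2.2.1
  omega

theorem IsMaxMatching.ncard_sdiff_le (hM : IsMaxMatching G M)
    (hMC : IsMatchingSet G (symmDiff M C)) : (C \ M).ncard ≤ (C ∩ M).ncard := by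
  have := Set.ncard_symmDiff_add_ncard_inter M C
  have := hM.2 _ hMC
  omega

/-- Exchanging `M` along `C` gains the edges of `C \ M ⊆ H` and loses those of `C ∩ M ∩ H'`,
so (iii) and then (iv) rule it out. -/
theorem MaxIntersecting.eq_empty_of_symmDiff (hmax : MaxIntersecting G M H H')
    (hC : C ⊆ symmDiff M H) (hMC : IsMatchingSet G (symmDiff M C))
    (hcard : (C \ M).ncard = (C ∩ M).ncard) : C = ∅ := by
  obtain ⟨hM, hpair, hiii, hiv⟩ := hmax
  have hM₂ : IsMaxMatching G (symmDiff M C) := by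
    refine ⟨hMC, fun N hN => (hM.2 N hN).trans_eq ?_⟩
    have := Set.ncard_symmDiff_add_ncard_inter M C
    omega
  have hCH : C \ M ⊆ H := fun e he => ((hC he.1).resolve_left fun h => he.2 h.1).1
  have hCMH : C ∩ M ∩ H = ∅ := by
    refine Set.eq_empty_of_forall_notMem fun e ⟨⟨heC, heM⟩, heH⟩ => ?_
    rcases hC heC with h | h
    exacts [h.2 heH, h.2 heM]
  have hCX : C \ M ∩ (H ∪ H') = C \ M :=
    Set.inter_eq_left.mpr (hCH.trans Set.subset_union_left)
  have hCMX : C ∩ M ∩ (H ∪ H') = C ∩ M ∩ H' := by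
    rw [Set.inter_union_distrib_left, hCMH, Set.empty_union]
  have hX := Set.ncard_symmDiff_inter_add_ncard_inter M C (H ∪ H')
  have hHcount := Set.ncard_symmDiff_inter_add_ncard_inter M C H
  rw [hCX, hCMX] at hX
  rw [Set.inter_eq_left.mpr hCH, hCMH, Set.ncard_empty] at hHcount
  have hle := hiii _ H H' hM₂ hpair
  have hle' : (C ∩ M).ncard ≤ (C ∩ M ∩ H').ncard := by omega
  have hCMH' : C ∩ M ∩ H' = C ∩ M := Set.eq_of_subset_of_ncard_le Set.inter_subset_left hle'
  rw [hCMH'] at hX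
  have := hiv _ H H' hM₂ hpair (by omega)
  rw [← Set.inter_union_sdiff C M, Set.union_empty_iff, ← Set.ncard_eq_zero, ← Set.ncard_eq_zero]
  omega

/-- Exchanging an edge `d ∈ H ∖ M` for an edge `e ∈ M ∖ H` keeps `(H, H')` optimal and gains
`e` for `M ∩ (H ∪ H')`, unless `e` already lies in `H'`. -/
theorem MaxIntersecting.mem_of_isMatchingSet_exchange (hmax : MaxIntersecting G M H H')
    {d : Sym2 V} (heM : e ∈ M) (heH : e ∉ H) (hdH : d ∈ H) (hdM : d ∉ M)
    (hmatch : IsMatchingSet G (insert e (H \ {d}))) : e ∈ H' := by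
  by_contra heH'
  obtain ⟨hM, ⟨-, hH', hdisj, hsum, hmu⟩, hiii, -⟩ := hmax
  have hcard : (insert e (H \ {d})).ncard = H.ncard := by
    rw [Set.ncard_insert_of_notMem fun h => heH h.1, Set.ncard_sdiff_singleton_add_one hdH]
  have hpair : IsLambdaMuPair G (insert e (H \ {d})) H' :=
    ⟨hmatch, hH', Set.disjoint_insert_left.mpr ⟨heH', hdisj.mono_left Set.sdiff_subset⟩,
      hcard ▸ hsum, hcard ▸ hmu⟩
  have hgain : M ∩ (insert e (H \ {d}) ∪ H') = insert e (M ∩ (H ∪ H')) := by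
    ext x
    have : x ∈ M → x ≠ d := fun hxM h => hdM (h ▸ hxM)
    have : x = e → x ∈ M := fun h => h ▸ heM
    simp only [Set.mem_inter_iff, Set.mem_union, Set.mem_insert_iff, Set.mem_sdiff,
      Set.mem_singleton_iff]
    tauto
  have := hiii M _ H' hM hpair
  rw [hgain, Set.ncard_insert_of_notMem fun h => h.2.elim heH heH'] at this
  omega

theorem MaxIntersecting.start_notMem_M_of_head_mem_H (hmax : MaxIntersecting G M H H')
    (hp : IsMaxAltPath G M H p) (he₁ : p.edges.head? = some e₁)
    (heₖ : p.edges.getLast? = some eₖ) (h₁H : e₁ ∈ H) : ∀ f ∈ M, u ∉ f := by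
  classical
  intro f hfM hfu
  have hM := hmax.isMatchingSet_M
  have h₁p : e₁ ∈ p.edges := List.mem_of_mem_head? he₁
  have hₖp : eₖ ∈ p.edges := List.mem_of_mem_getLast? heₖ
  have h₁M : e₁ ∉ M := fun h => (hp.1.mem_iff_notMem h₁p).mp h h₁H
  have hfH : f ∉ H := fun hfH =>
    h₁M (hmax.isMatchingSet_H.eq_of_mem_of_mem hfH h₁H hfu (start_mem_of_head?_edges he₁) ▸ hfM)
  have hf := hp.eq_of_start_mem hM he₁ h₁M hfM hfH hfu
  have hfp : f ∉ p.edges := fun h => h₁M (hp.1.2.1.eq_of_head?_edges he₁ h hfu ▸ hfM)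
  have hfv : v ∈ f := hf ▸ Sym2.mem_mk_right u v
  have hₖM : eₖ ∉ M := fun h =>
    hfp (hM.eq_of_mem_of_mem hfM h hfv (end_mem_of_getLast?_edges heₖ) ▸ hₖp)
  have hC := hmax.eq_empty_of_symmDiff (C := insert f p.edgeSet) ?_ ?_ ?_
  · exact (Set.insert_nonempty _ _).ne_empty hC
  · exact Set.insert_subset (Or.inl ⟨hfM, hfH⟩) hp.1.edgeSet_subset_symmDiff
  · refine hp.1.isMatchingSet_symmDiff hM (Set.subset_insert _ _) (by rw [hf]) ?_ ?_ ?_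
    · rw [Set.insert_sdiff_of_mem _ hfM]
      exact hp.1.isMatchingSet_edgeSet_sdiff
    · exact fun e he hue => hM.eq_of_mem_of_mem he hfM hue hfu ▸ Set.mem_insert _ _
    · exact fun e he hve => hM.eq_of_mem_of_mem he hfM hve hfv ▸ Set.mem_insert _ _
  · rw [Set.insert_sdiff_of_mem _ hfM, Set.insert_inter_of_mem hfM,
      Set.ncard_insert_of_notMem fun h => hfp h.1]
    have := hp.1.ncard_inter_add_one he₁ heₖ
    rw [if_neg h₁M, if_neg hₖM] at this
    omega

theorem MaxIntersecting.head_notMem_H (hmax : MaxIntersecting G M H H')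
    (hp : IsMaxAltPath G M H p) (he₁ : p.edges.head? = some e₁)
    (heₖ : p.edges.getLast? = some eₖ) : e₁ ∉ H := by
  classical
  intro h₁H
  have hM := hmax.isMatchingSet_M
  have h₁p : e₁ ∈ p.edges := List.mem_of_mem_head? he₁
  have hₖp : eₖ ∈ p.edges := List.mem_of_mem_getLast? heₖ
  have h₁M : e₁ ∉ M := (hp.1.symm.mem_iff_notMem h₁p).mp h₁H
  have hu := hmax.start_notMem_M_of_head_mem_H hp he₁ heₖ h₁H
  have hswap := hp.1.isMatchingSet_symmDiff hM subset_rfl (Set.subset_insert _ _)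
    hp.1.isMatchingSet_edgeSet_sdiff fun e he hue => absurd hue (hu e he)
  have hcount := hp.1.ncard_inter_add_one he₁ heₖ
  rw [if_neg h₁M] at hcount
  by_cases hₖM : eₖ ∈ M
  · have hv : ∀ e ∈ M, v ∈ e → e ∈ p.edgeSet := fun e he hve =>
      hM.eq_of_mem_of_mem he hₖM hve (end_mem_of_getLast?_edges heₖ) ▸ hₖp
    rw [if_pos hₖM] at hcount
    have hC := hmax.eq_empty_of_symmDiff hp.1.edgeSet_subset_symmDiff (hswap hv) (by omega)
    exact hC.subset h₁p
  · -- `p` is `M`-augmenting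
    have hv := hmax.start_notMem_M_of_head_mem_H hp.reverse (by rwa [head?_edges_reverse])
      (by rwa [getLast?_edges_reverse]) ((hp.1.symm.mem_iff_notMem hₖp).mpr hₖM)
    have := hmax.1.ncard_sdiff_le (hswap fun e he hve => absurd hve (hv e he))
    rw [if_neg hₖM] at hcount
    omega

theorem MaxIntersecting.start_notMem_H (hmax : MaxIntersecting G M H H')
    (hp : IsMaxAltPath G M H p) (he₁ : p.edges.head? = some e₁)
    (heₖ : p.edges.getLast? = some eₖ) : ∀ f ∈ H, u ∉ f := by
  classical
  intro f hfH hfu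
  have hM := hmax.isMatchingSet_M
  have hpath := hp.1.2.1
  have h₁p : e₁ ∈ p.edges := List.mem_of_mem_head? he₁
  have hₖp : eₖ ∈ p.edges := List.mem_of_mem_getLast? heₖ
  have hu₁ := start_mem_of_head?_edges he₁
  have hvₖ := end_mem_of_getLast?_edges heₖ
  have h₁M : e₁ ∈ M := (hp.1.mem_iff_notMem h₁p).mpr (hmax.head_notMem_H hp he₁ heₖ)
  have hₖM : eₖ ∈ M := (hp.1.mem_iff_notMem hₖp).mpr <| hmax.head_notMem_H hp.reverse
    (by rwa [head?_edges_reverse]) (by rwa [getLast?_edges_reverse])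
  have hfM : f ∉ M := fun h =>
    (hp.1.mem_iff_notMem h₁p).mp h₁M (hM.eq_of_mem_of_mem h h₁M hfu hu₁ ▸ hfH)
  have hf := hp.symm.eq_of_start_mem hmax.isMatchingSet_H he₁
    ((hp.1.mem_iff_notMem h₁p).mp h₁M) hfH hfM hfu
  have hfv : v ∈ f := hf ▸ Sym2.mem_mk_right u v
  have hfp : f ∉ p.edges := fun h => hfM (hpath.eq_of_head?_edges he₁ h hfu ▸ h₁M)
  have hC := hmax.eq_empty_of_symmDiff (C := insert f p.edgeSet) ?_ ?_ ?_
  · exact (Set.insert_nonempty _ _).ne_empty hC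
  · exact Set.insert_subset (Or.inr ⟨hfH, hfM⟩) hp.1.edgeSet_subset_symmDiff
  · refine hp.1.isMatchingSet_symmDiff hM (Set.subset_insert _ _) (by rw [hf]) ?_ ?_ ?_
    · rw [Set.insert_sdiff_of_notMem _ hfM]
      refine hp.1.isMatchingSet_edgeSet_sdiff.insert (hmax.isMatchingSet_H.1 hfH) ?_
      intro g hg w hwf hwg
      rw [hf] at hwf
      rcases Sym2.mem_iff.mp hwf with rfl | rfl
      · exact hg.2 (hpath.eq_of_head?_edges he₁ hg.1 hwg ▸ h₁M)
      · exact hg.2 (hpath.eq_of_getLast?_edges heₖ hg.1 hwg ▸ hₖM)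
    · exact fun e he hue => hM.eq_of_mem_of_mem he h₁M hue hu₁ ▸ Set.mem_insert_of_mem _ h₁p
    · exact fun e he hve => hM.eq_of_mem_of_mem he hₖM hve hvₖ ▸ Set.mem_insert_of_mem _ hₖp
  · rw [Set.insert_sdiff_of_notMem _ hfM, Set.insert_inter_of_notMem hfM,
      Set.ncard_insert_of_notMem fun h => hfp h.1]
    have := hp.1.ncard_inter_add_one he₁ heₖ
    rw [if_pos h₁M, if_pos hₖM] at this
    omega

theorem MaxIntersecting.head_mem_H' (hmax : MaxIntersecting G M H H')
    (hp : IsMaxAltPath G M H p) (he₁ : p.edges.head? = some e₁)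
    (heₖ : p.edges.getLast? = some eₖ) : e₁ ∈ H' := by
  by_contra h₁H'
  have hH := hmax.isMatchingSet_H
  have h₁p : e₁ ∈ p.edges := List.mem_of_mem_head? he₁
  have h₁H : e₁ ∉ H := hmax.head_notMem_H hp he₁ heₖ
  have h₁M : e₁ ∈ M := (hp.1.mem_iff_notMem h₁p).mpr h₁H
  have h₁E : e₁ ∈ G.edgeSet := hmax.isMatchingSet_M.1 h₁M
  have hu := hmax.start_notMem_H hp he₁ heₖ
  cases p with
  | nil => simp at he₁
  | @cons _ b _ hadj q =>
    obtain rfl : s(u, b) = e₁ := by simpa using he₁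
    cases q with
    | nil =>
      simp only [edges_cons, edges_nil, List.getLast?_singleton, Option.some.injEq] at heₖ
      subst heₖ
      have hv := hmax.start_notMem_H hp.reverse (by rwa [head?_edges_reverse])
        (by rwa [getLast?_edges_reverse])
      refine hmax.2.1.not_isMatchingSet_insert h₁H h₁H' (hH.insert h₁E ?_)
      intro g hg w hw hwg
      rcases Sym2.mem_iff.mp hw with rfl | rfl
      exacts [hu g hg hwg, hv g hg hwg]
    | @cons _ d _ hadj' r =>
      have h₂p : s(b, d) ∈ (cons hadj (cons hadj' r)).edges := by simp
      have h₂M : s(b, d) ∉ M := by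
        have := hp.1.2.2.2
        rw [edges_cons, edges_cons, List.Chain', List.isChain_cons_cons] at this
        tauto
      have h₂H : s(b, d) ∈ H := (hp.1.symm.mem_iff_notMem h₂p).mpr h₂M
      refine h₁H' (hmax.mem_of_isMatchingSet_exchange h₁M h₁H h₂H h₂M ?_)
      refine (hH.subset Set.sdiff_subset).insert h₁E ?_
      intro g hg w hw hwg
      rcases Sym2.mem_iff.mp hw with rfl | rfl
      · exact hu g hg.1 hwg
      · exact hg.2 (hH.eq_of_mem_of_mem hg.1 h₂H hwg (Sym2.mem_mk_left _ _))

end Finite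

theorem stmt_11_general [Fintype V] (G : SimpleGraph V)
    (M H H' : Set (Sym2 V)) (hmax : MaxIntersecting G M H H') :
    ∀ (u v : V) (p : G.Walk u v), IsMaxAltPath G M H p →
      (∀ e, p.edges.head? = some e → e ∈ H') ∧
      (∀ e, p.edges.getLast? = some e → e ∈ H') := by
  intro u v p hp
  have hne : p.edges ≠ [] := List.ne_nil_of_length_pos (by rw [length_edges]; exact hp.1.1)
  obtain ⟨e₁, he₁⟩ := Option.isSome_iff_exists.mp (List.isSome_head?.mpr hne)
  obtain ⟨eₖ, heₖ⟩ := Option.isSome_iff_exists.mp (List.getLast?_isSome.mpr hne)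
  refine ⟨fun e he => hmax.head_mem_H' hp he heₖ, fun e he => ?_⟩
  exact hmax.head_mem_H' hp.reverse (by rwa [head?_edges_reverse]) (by rwa [getLast?_edges_reverse])

/-- For maximally intersecting matchings `M`, `H`, `H'` of a finite connected
graph `G`, every end-edge of a maximal `M`-`H` alternating path belongs to `H'`. -/
theorem stmt_11 [Fintype V] (G : SimpleGraph V) (hconn : G.Connected)
    (M H H' : Set (Sym2 V)) (hmax : MaxIntersecting G M H H') :
    ∀ (u v : V) (p : G.Walk u v), IsMaxAltPath G M H p →
      (∀ e, p.edges.head? = some e → e ∈ H') ∧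
      (∀ e, p.edges.getLast? = some e → e ∈ H') :=
  stmt_11_general G M H H' hmax
end
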